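/- Let (U^n,V^n) ~ DSBS(p)^⊗n on {0,1}^n × {0,1}^n, let f,g : {0,1}^n → {0,1}^n, set X^n = f(U^n), Y^n = g(V^n), and suppose D(p_{X^nY^n} ‖ p_{XY}^{⊗n}) ≤ ε where p_{XY} is DSBS(p). Then Pr( |f^{−1}(X^n)| > 1 or |g^{−1}(Y^n)| > 1 ) ≤ 2ε, where f^{−1}(x^n) denotes the preimage set of x^n under f. -/
import Mathlib
open Finset

/-- KL divergence in bits (finite-alphabet sum form, convention `0 · log 0 = 0`). -/
noncomputable def klDiv {α : Type*} [Fintype α] (p q : α → ℝ) : ℝ :=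
  ∑ a, p a * Real.logb 2 (p a / q a)

noncomputable def dsbsPair (p : ℝ) (uv : Bool × Bool) : ℝ :=
  if uv.1 = uv.2 then (1 - p) / 2 else p / 2

lemma dsbs_nonneg {p : ℝ} (hp0 : 0 ≤ p) (hp1 : p ≤ 1) (uv : Bool × Bool) :
    0 ≤ dsbsPair p uv := by
  unfold dsbsPair; split <;> linarith

lemma sum_dsbs_snd {p : ℝ} (c : Bool) : ∑ b : Bool, dsbsPair p (c, b) = 1/2 := by
  rw [Fintype.sum_bool]; cases c <;> simp [dsbsPair] <;> ring

lemma sum_dsbs_fst {p : ℝ} (c : Bool) : ∑ b : Bool, dsbsPair p (b, c) = 1/2 := by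
  rw [Fintype.sum_bool]; cases c <;> simp [dsbsPair] <;> ring

lemma marg_snd {p : ℝ} {n : ℕ} (u : Fin n → Bool) :
    ∑ v : Fin n → Bool, ∏ i, dsbsPair p (u i, v i) = (1/2 : ℝ)^n := by
  have h := Finset.prod_univ_sum (fun _ : Fin n => (Finset.univ : Finset Bool))
      (fun i b => dsbsPair p (u i, b))
  rw [Fintype.piFinset_univ] at h
  rw [← h]
  simp only [sum_dsbs_snd, Finset.prod_const, Finset.card_univ, Fintype.card_fin]

lemma marg_fst {p : ℝ} {n : ℕ} (v : Fin n → Bool) :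
    ∑ u : Fin n → Bool, ∏ i, dsbsPair p (u i, v i) = (1/2 : ℝ)^n := by
  have h := Finset.prod_univ_sum (fun _ : Fin n => (Finset.univ : Finset Bool))
      (fun i b => dsbsPair p (b, v i))
  rw [Fintype.piFinset_univ] at h
  rw [← h]
  simp only [sum_dsbs_fst, Finset.prod_const, Finset.card_univ, Fintype.card_fin]

lemma log_sum_ineq {ι : Type*} [Fintype ι] (a b : ι → ℝ)
    (ha : ∀ i, 0 ≤ a i) (hb : ∀ i, 0 ≤ b i) (habs : ∀ i, b i = 0 → a i = 0) :
    (∑ i, a i) * Real.log ((∑ i, a i) / (∑ i, b i)) ≤ ∑ i, a i * Real.log (a i / b i) := by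
  set A := ∑ i, a i with hA
  set B := ∑ i, b i with hB
  rcases eq_or_lt_of_le (Finset.sum_nonneg (fun i (_ : i ∈ univ) => hb i)) with hB0 | hB0
  · have hb0 : ∀ i ∈ (univ : Finset ι), b i = 0 :=
      (Finset.sum_eq_zero_iff_of_nonneg (fun i _ => hb i)).1 hB0.symm
    have ha0 : ∀ i, a i = 0 := fun i => habs i (hb0 i (mem_univ i))
    simp [hA, ha0]
  · have hABnn : 0 ≤ A / B := div_nonneg (Finset.sum_nonneg fun i _ => ha i) hB0.le
    have key : ∀ i ∈ (univ : Finset ι),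
        a i * Real.log (A/B) + a i - (A/B) * b i ≤ a i * Real.log (a i / b i) := by
      intro i _
      rcases eq_or_lt_of_le (ha i) with h0 | h0
      · rw [← h0]
        have : 0 ≤ (A/B) * b i := mul_nonneg hABnn (hb i)
        simp; linarith
      · have hbi : 0 < b i := by
          rcases eq_or_lt_of_le (hb i) with h | h
          · exact absurd (habs i h.symm) (ne_of_gt h0)
          · exact h
        have hAi : 0 < A := lt_of_lt_of_le h0
          (Finset.single_le_sum (fun j _ => ha j) (mem_univ i))
        have hlog := Real.log_le_sub_one_of_pos
          (show 0 < (b i * A)/(a i * B) by positivity)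
        have hsplit : Real.log ((b i * A)/(a i * B))
            = Real.log (A/B) - Real.log (a i / b i) := by
          rw [Real.log_div (by positivity) (by positivity),
            Real.log_mul (ne_of_gt hbi) (ne_of_gt hAi),
            Real.log_mul (ne_of_gt h0) (ne_of_gt hB0),
            Real.log_div (ne_of_gt hAi) (ne_of_gt hB0),
            Real.log_div (ne_of_gt h0) (ne_of_gt hbi)]
          ring
        rw [hsplit] at hlog
        have h2 : a i * ((b i * A)/(a i * B)) = A / B * b i := by
          field_simp
        nlinarith [mul_le_mul_of_nonneg_left hlog h0.le]
    have hsum : ∑ i, (a i * Real.log (A/B) + a i - (A/B) * b i)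
        = A * Real.log (A/B) + A - (A/B) * B := by
      rw [Finset.sum_sub_distrib, Finset.sum_add_distrib, ← Finset.sum_mul,
        ← Finset.mul_sum, ← hA, ← hB]
    have hfin := Finset.sum_le_sum key
    rw [hsum] at hfin
    have : (A/B) * B = A := div_mul_cancel₀ A (ne_of_gt hB0)
    linarith

lemma logb_sum_ineq {ι : Type*} [Fintype ι] (a b : ι → ℝ)
    (ha : ∀ i, 0 ≤ a i) (hb : ∀ i, 0 ≤ b i) (habs : ∀ i, b i = 0 → a i = 0) :
    (∑ i, a i) * Real.logb 2 ((∑ i, a i) / (∑ i, b i))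
      ≤ ∑ i, a i * Real.logb 2 (a i / b i) := by
  have h := log_sum_ineq a b ha hb habs
  have hl2 : (0:ℝ) < Real.log 2 := Real.log_pos one_lt_two
  simp only [Real.logb, ← mul_div_assoc]
  rw [← Finset.sum_div]
  gcongr
def fiberCard {n : ℕ} (f : (Fin n → Bool) → (Fin n → Bool)) (x : Fin n → Bool) : ℕ :=
  (Finset.univ.filter (fun u' => f u' = x)).card

lemma hpX_lem  (p : ℝ) (n : ℕ)
    (f g : (Fin n → Bool) → (Fin n → Bool))
    (pJ : (Fin n → Bool) × (Fin n → Bool) → ℝ)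
    (hpJ' : ∀ x y : Fin n → Bool, pJ (x, y)
      = ∑ u : Fin n → Bool, ∑ v : Fin n → Bool,
          (∏ i, dsbsPair p (u i, v i)) * (if f u = x then (1:ℝ) else 0) *
            (if g v = y then (1:ℝ) else 0)) :
    ∀ x, ∑ y : Fin n → Bool, pJ (x, y) = (fiberCard f x : ℝ) * (1/2:ℝ)^n := by
  intro x
  simp only [hpJ']
  rw [Finset.sum_comm]
  have hu : ∀ u : Fin n → Bool,
      (∑ y : Fin n → Bool, ∑ v : Fin n → Bool,
        ((∏ i, dsbsPair p (u i, v i)) * (if f u = x then (1:ℝ) else 0) *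
          (if g v = y then (1:ℝ) else 0)))
      = (1/2:ℝ)^n * (if f u = x then (1:ℝ) else 0) := by
    intro u
    rw [Finset.sum_comm]
    have h1 : ∀ v : Fin n → Bool,
        (∑ y : Fin n → Bool,
          ((∏ i, dsbsPair p (u i, v i)) * (if f u = x then (1:ℝ) else 0) *
            (if g v = y then (1:ℝ) else 0)))
        = (∏ i, dsbsPair p (u i, v i)) * (if f u = x then (1:ℝ) else 0) := by
      intro v
      rw [← Finset.mul_sum]
      simp [Finset.sum_ite_eq]
    simp only [h1]
    rw [← Finset.sum_mul, marg_snd]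
  simp only [hu]
  rw [← Finset.mul_sum, Finset.sum_boole]
  rw [mul_comm]
  norm_num [fiberCard]

lemma hpY_lem  (p : ℝ) (n : ℕ)
    (f g : (Fin n → Bool) → (Fin n → Bool))
    (pJ : (Fin n → Bool) × (Fin n → Bool) → ℝ)
    (hpJ' : ∀ x y : Fin n → Bool, pJ (x, y)
      = ∑ u : Fin n → Bool, ∑ v : Fin n → Bool,
          (∏ i, dsbsPair p (u i, v i)) * (if f u = x then (1:ℝ) else 0) *
            (if g v = y then (1:ℝ) else 0)) :
    ∀ y, ∑ x : Fin n → Bool, pJ (x, y) = (fiberCard g y : ℝ) * (1/2:ℝ)^n := by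
  intro y
  simp only [hpJ']
  have hswap : ∀ u : Fin n → Bool,
      (∑ x : Fin n → Bool, ∑ v : Fin n → Bool,
        ((∏ i, dsbsPair p (u i, v i)) * (if f u = x then (1:ℝ) else 0) *
          (if g v = y then (1:ℝ) else 0)))
      = ∑ v : Fin n → Bool,
          (∏ i, dsbsPair p (u i, v i)) * (if g v = y then (1:ℝ) else 0) := by
    intro u
    rw [Finset.sum_comm]
    refine Finset.sum_congr rfl fun v _ => ?_
    have hre : ∀ x : Fin n → Bool,
        (∏ i, dsbsPair p (u i, v i)) * (if f u = x then (1:ℝ) else 0) *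
          (if g v = y then (1:ℝ) else 0)
        = ((∏ i, dsbsPair p (u i, v i)) * (if g v = y then (1:ℝ) else 0)) *
            (if f u = x then (1:ℝ) else 0) := by
      intro x; ring
    simp only [hre]
    rw [← Finset.mul_sum]
    simp [Finset.sum_ite_eq]
  rw [Finset.sum_comm]
  simp only [hswap]
  rw [Finset.sum_comm]
  have hv : ∀ v : Fin n → Bool,
      (∑ u : Fin n → Bool, (∏ i, dsbsPair p (u i, v i)) * (if g v = y then (1:ℝ) else 0))
      = (1/2:ℝ)^n * (if g v = y then (1:ℝ) else 0) := by
    intro v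
    rw [← Finset.sum_mul, marg_fst]
  simp only [hv]
  rw [← Finset.mul_sum, Finset.sum_boole]
  rw [mul_comm]
  norm_num [fiberCard]

/-- Lemma 5 of the paper: if `X^n = f(U^n)`, `Y^n = g(V^n)` and the joint
law of `(X^n,Y^n)` is within KL divergence `ε` of `DSBS(p)^{⊗n}`, then the probability
that the current output has a non-singleton preimage under `f` or `g` is at most `2ε`. -/
theorem stmt8 (p ε : ℝ) (hp0 : 0 ≤ p) (hp1 : p ≤ 1) (n : ℕ)
    (f g : (Fin n → Bool) → (Fin n → Bool))
    (pJ : (Fin n → Bool) × (Fin n → Bool) → ℝ)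
    (hpJ : ∀ xy, pJ xy
      = ∑ u : Fin n → Bool, ∑ v : Fin n → Bool,
          (∏ i, dsbsPair p (u i, v i)) * (if f u = xy.1 then (1:ℝ) else 0) *
            (if g v = xy.2 then (1:ℝ) else 0))
    -- absolute continuity (implicit in `D ≤ ε < ∞` with the `+∞` convention)
    (habs : ∀ xy : (Fin n → Bool) × (Fin n → Bool),
      (∏ i, dsbsPair p (xy.1 i, xy.2 i)) = 0 → pJ xy = 0)
    (hD : klDiv pJ (fun xy => ∏ i, dsbsPair p (xy.1 i, xy.2 i)) ≤ ε) :
    (∑ u : Fin n → Bool, ∑ v : Fin n → Bool,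
        if 1 < (Finset.univ.filter (fun u' : Fin n → Bool => f u' = f u)).card
            ∨ 1 < (Finset.univ.filter (fun v' : Fin n → Bool => g v' = g v)).card
        then ∏ i, dsbsPair p (u i, v i) else 0)
      ≤ 2 * ε := by
  classical
  have ht : (0:ℝ) < (1/2:ℝ)^n := by positivity
  have hqnn : ∀ (u v : Fin n → Bool), 0 ≤ ∏ i, dsbsPair p (u i, v i) :=
    fun u v => Finset.prod_nonneg fun i _ => dsbs_nonneg hp0 hp1 _
  have hpJnn : ∀ xy, 0 ≤ pJ xy := by
    intro xy; rw [hpJ]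
    refine Finset.sum_nonneg fun u _ => Finset.sum_nonneg fun v _ =>
      mul_nonneg (mul_nonneg (hqnn u v) ?_) ?_ <;> (split <;> norm_num)
  have hpJ' : ∀ x y : Fin n → Bool, pJ (x, y)
      = ∑ u : Fin n → Bool, ∑ v : Fin n → Bool,
          (∏ i, dsbsPair p (u i, v i)) * (if f u = x then (1:ℝ) else 0) *
            (if g v = y then (1:ℝ) else 0) := fun x y => hpJ (x, y)
  have hpX := hpX_lem p n f g pJ hpJ'
  have hpY := hpY_lem p n f g pJ hpJ'
  -- data-processing: divergence of the X-marginal is at most ε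
  have hDPI_f : ∑ x : Fin n → Bool,
      ((fiberCard f x : ℝ) * (1/2:ℝ)^n) *
        Real.logb 2 (((fiberCard f x : ℝ) * (1/2:ℝ)^n) / (1/2:ℝ)^n) ≤ ε := by
    calc ∑ x : Fin n → Bool, ((fiberCard f x : ℝ) * (1/2:ℝ)^n) *
          Real.logb 2 (((fiberCard f x : ℝ) * (1/2:ℝ)^n) / (1/2:ℝ)^n)
        = ∑ x : Fin n → Bool, ((∑ y : Fin n → Bool, pJ (x, y)) *
            Real.logb 2 ((∑ y : Fin n → Bool, pJ (x, y)) /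
              (∑ y : Fin n → Bool, ∏ i, dsbsPair p (x i, y i)))) := by
          refine Finset.sum_congr rfl fun x _ => ?_
          rw [hpX x, marg_snd x]
      _ ≤ ∑ x : Fin n → Bool, ∑ y : Fin n → Bool,
            pJ (x, y) * Real.logb 2 (pJ (x, y) / ∏ i, dsbsPair p (x i, y i)) := by
          refine Finset.sum_le_sum fun x _ => ?_
          exact logb_sum_ineq (fun y => pJ (x, y)) (fun y => ∏ i, dsbsPair p (x i, y i))
            (fun y => hpJnn _) (fun y => hqnn _ _) (fun y h => habs (x, y) h)
      _ = klDiv pJ (fun xy => ∏ i, dsbsPair p (xy.1 i, xy.2 i)) := by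
          rw [klDiv, Fintype.sum_prod_type]
      _ ≤ ε := hD
  -- data-processing: divergence of the Y-marginal is at most ε
  have hDPI_g : ∑ y : Fin n → Bool,
      ((fiberCard g y : ℝ) * (1/2:ℝ)^n) *
        Real.logb 2 (((fiberCard g y : ℝ) * (1/2:ℝ)^n) / (1/2:ℝ)^n) ≤ ε := by
    calc ∑ y : Fin n → Bool, ((fiberCard g y : ℝ) * (1/2:ℝ)^n) *
          Real.logb 2 (((fiberCard g y : ℝ) * (1/2:ℝ)^n) / (1/2:ℝ)^n)
        = ∑ y : Fin n → Bool, ((∑ x : Fin n → Bool, pJ (x, y)) *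
            Real.logb 2 ((∑ x : Fin n → Bool, pJ (x, y)) /
              (∑ x : Fin n → Bool, ∏ i, dsbsPair p (x i, y i)))) := by
          refine Finset.sum_congr rfl fun y _ => ?_
          rw [hpY y, marg_fst y]
      _ ≤ ∑ y : Fin n → Bool, ∑ x : Fin n → Bool,
            pJ (x, y) * Real.logb 2 (pJ (x, y) / ∏ i, dsbsPair p (x i, y i)) := by
          refine Finset.sum_le_sum fun y _ => ?_
          exact logb_sum_ineq (fun x => pJ (x, y)) (fun x => ∏ i, dsbsPair p (x i, y i))
            (fun x => hpJnn _) (fun x => hqnn _ _) (fun x h => habs (x, y) h)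
      _ = klDiv pJ (fun xy => ∏ i, dsbsPair p (xy.1 i, xy.2 i)) := by
          rw [klDiv, Fintype.sum_prod_type, Finset.sum_comm]
      _ ≤ ε := hD
  -- termwise lower bound on the divergence summands
  have hterm : ∀ c : ℕ, (if 1 < c then (c : ℝ) * (1/2:ℝ)^n else 0)
      ≤ ((c : ℝ) * (1/2:ℝ)^n) * Real.logb 2 (((c : ℝ) * (1/2:ℝ)^n) / (1/2:ℝ)^n) := by
    intro c
    rw [mul_div_cancel_right₀ _ (ne_of_gt ht)]
    by_cases h : 1 < c
    · rw [if_pos h]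
      have h2 : (2 : ℝ) ≤ (c : ℝ) := by exact_mod_cast h
      have hlb : (1 : ℝ) ≤ Real.logb 2 (c : ℝ) := by
        have h22 : Real.logb 2 2 = 1 := Real.logb_self_eq_one (by norm_num)
        calc (1 : ℝ) = Real.logb 2 2 := h22.symm
          _ ≤ Real.logb 2 (c : ℝ) := Real.logb_le_logb_of_le (by norm_num) (by norm_num) h2
      nlinarith [mul_le_mul_of_nonneg_left hlb
        (show (0:ℝ) ≤ (c : ℝ) * (1/2:ℝ)^n by positivity)]
    · rw [if_neg h]
      have hc : c = 0 ∨ c = 1 := by omega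
      rcases hc with rfl | rfl <;> simp
  -- fiberwise regrouping, f-side
  have hF : (∑ u : Fin n → Bool, ∑ v : Fin n → Bool,
      if 1 < fiberCard f (f u) then ∏ i, dsbsPair p (u i, v i) else 0) ≤ ε := by
    have e1 : ∀ u : Fin n → Bool,
        (∑ v : Fin n → Bool,
          if 1 < fiberCard f (f u) then ∏ i, dsbsPair p (u i, v i) else 0)
        = if 1 < fiberCard f (f u) then (1/2:ℝ)^n else 0 := by
      intro u; by_cases h : 1 < fiberCard f (f u) <;> simp [h, marg_snd u]
    simp only [e1]
    have e2 : (∑ u : Fin n → Bool, if 1 < fiberCard f (f u) then (1/2:ℝ)^n else 0)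
        = ∑ x : Fin n → Bool,
            (fiberCard f x : ℝ) * (if 1 < fiberCard f x then (1/2:ℝ)^n else 0) := by
      have h := Finset.sum_fiberwise_eq_sum_filter' (univ : Finset (Fin n → Bool)) univ f
        (fun x => if 1 < fiberCard f x then (1/2:ℝ)^n else 0)
      simp only [Finset.mem_univ, Finset.filter_true] at h
      rw [← h]
      refine Finset.sum_congr rfl fun x _ => ?_
      rw [Finset.sum_const, nsmul_eq_mul]
      rfl
    rw [e2]
    calc ∑ x : Fin n → Bool,
          (fiberCard f x : ℝ) * (if 1 < fiberCard f x then (1/2:ℝ)^n else 0)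
        = ∑ x : Fin n → Bool,
            (if 1 < fiberCard f x then (fiberCard f x : ℝ) * (1/2:ℝ)^n else 0) := by
          refine Finset.sum_congr rfl fun x _ => ?_
          split_ifs <;> simp
      _ ≤ ∑ x : Fin n → Bool, ((fiberCard f x : ℝ) * (1/2:ℝ)^n) *
            Real.logb 2 (((fiberCard f x : ℝ) * (1/2:ℝ)^n) / (1/2:ℝ)^n) :=
          Finset.sum_le_sum fun x _ => hterm (fiberCard f x)
      _ ≤ ε := hDPI_f
  -- fiberwise regrouping, g-side
  have hG : (∑ u : Fin n → Bool, ∑ v : Fin n → Bool,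
      if 1 < fiberCard g (g v) then ∏ i, dsbsPair p (u i, v i) else 0) ≤ ε := by
    rw [Finset.sum_comm]
    have e1 : ∀ v : Fin n → Bool,
        (∑ u : Fin n → Bool,
          if 1 < fiberCard g (g v) then ∏ i, dsbsPair p (u i, v i) else 0)
        = if 1 < fiberCard g (g v) then (1/2:ℝ)^n else 0 := by
      intro v; by_cases h : 1 < fiberCard g (g v) <;> simp [h, marg_fst v]
    simp only [e1]
    have e2 : (∑ v : Fin n → Bool, if 1 < fiberCard g (g v) then (1/2:ℝ)^n else 0)
        = ∑ y : Fin n → Bool,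
            (fiberCard g y : ℝ) * (if 1 < fiberCard g y then (1/2:ℝ)^n else 0) := by
      have h := Finset.sum_fiberwise_eq_sum_filter' (univ : Finset (Fin n → Bool)) univ g
        (fun y => if 1 < fiberCard g y then (1/2:ℝ)^n else 0)
      simp only [Finset.mem_univ, Finset.filter_true] at h
      rw [← h]
      refine Finset.sum_congr rfl fun y _ => ?_
      rw [Finset.sum_const, nsmul_eq_mul]
      rfl
    rw [e2]
    calc ∑ y : Fin n → Bool,
          (fiberCard g y : ℝ) * (if 1 < fiberCard g y then (1/2:ℝ)^n else 0)
        = ∑ y : Fin n → Bool,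
            (if 1 < fiberCard g y then (fiberCard g y : ℝ) * (1/2:ℝ)^n else 0) := by
          refine Finset.sum_congr rfl fun y _ => ?_
          split_ifs <;> simp
      _ ≤ ∑ y : Fin n → Bool, ((fiberCard g y : ℝ) * (1/2:ℝ)^n) *
            Real.logb 2 (((fiberCard g y : ℝ) * (1/2:ℝ)^n) / (1/2:ℝ)^n) :=
          Finset.sum_le_sum fun y _ => hterm (fiberCard g y)
      _ ≤ ε := hDPI_g
  -- union bound
  show (∑ u : Fin n → Bool, ∑ v : Fin n → Bool,
      if 1 < fiberCard f (f u) ∨ 1 < fiberCard g (g v)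
      then ∏ i, dsbsPair p (u i, v i) else 0) ≤ 2 * ε
  calc (∑ u : Fin n → Bool, ∑ v : Fin n → Bool,
        if 1 < fiberCard f (f u) ∨ 1 < fiberCard g (g v)
        then ∏ i, dsbsPair p (u i, v i) else 0)
      ≤ ∑ u : Fin n → Bool, ∑ v : Fin n → Bool,
          ((if 1 < fiberCard f (f u) then ∏ i, dsbsPair p (u i, v i) else 0)
            + (if 1 < fiberCard g (g v) then ∏ i, dsbsPair p (u i, v i) else 0)) := by
        refine Finset.sum_le_sum fun u _ => Finset.sum_le_sum fun v _ => ?_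
        by_cases h1 : 1 < fiberCard f (f u) <;> by_cases h2 : 1 < fiberCard g (g v) <;>
          simp [h1, h2, hqnn u v]
    _ = (∑ u : Fin n → Bool, ∑ v : Fin n → Bool,
          if 1 < fiberCard f (f u) then ∏ i, dsbsPair p (u i, v i) else 0)
        + (∑ u : Fin n → Bool, ∑ v : Fin n → Bool,
          if 1 < fiberCard g (g v) then ∏ i, dsbsPair p (u i, v i) else 0) := by
        rw [← Finset.sum_add_distrib]
        exact Finset.sum_congr rfl fun u _ => Finset.sum_add_distrib
    _ ≤ ε + ε := add_le_add hF hG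
    _ = 2 * ε := by ring
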